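/- arXiv:2509.25467 — 4 statements merged into one kernel-verified Lean document; each statement's English description precedes it below -/
import Mathlib

section
/- Fix Q > S > 0. The function M(r) = (e^{Qr} - e^{-Sr})/(e^{Qr} - e^{Sr}) is (strictly) decreasing on (0,∞), and its limit as r → 0⁺ equals (Q+S)/(Q-S). -/
/-!
Writing `k = slope exp 0`, i.e. `k x = (e^x - 1)/x`, and factoring `e^{Sr}` out of numerator and
denominator gives `M r = 1 + 2S/(Q-S) · k(-2Sr) / k((Q-S)r)`. Strict convexity of `exp` makes `k`
positive and strictly increasing away from `0`, so for `r > 0` the numerator decreases and the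
denominator increases; and `k x → exp' 0 = 1` as `x → 0`.
-/

open Real Filter Set Topology

lemma one_add_mul_slope_exp_zero (x : ℝ) : 1 + x * slope exp 0 x = exp x := by
  simpa [eq_sub_iff_add_eq'] using sub_smul_slope exp 0 x

lemma slope_exp_zero_pos {x : ℝ} (hx : x ≠ 0) : 0 < slope exp 0 x := by
  rcases hx.lt_or_gt with hx | hx
  · exact (slope_pos_iff_gt hx).2 (exp_lt_exp.2 hx)
  · exact (slope_pos_iff hx).2 (exp_lt_exp.2 hx)

lemma strictMonoOn_slope_exp_zero : StrictMonoOn (slope exp 0) {0}ᶜ := by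
  intro x hx y hy hxy
  simpa only [slope_def_field, sub_zero] using
    strictConvexOn_exp.secant_strict_mono (mem_univ 0) (mem_univ x) (mem_univ y) hx hy hxy

lemma tendsto_slope_exp_zero : Tendsto (slope exp 0) (𝓝[≠] 0) (𝓝 1) :=
  hasDerivAt_iff_tendsto_slope.1 (by simpa using hasDerivAt_exp 0)

lemma tendsto_const_mul_nhdsNE_zero {c : ℝ} (hc : c ≠ 0) :
    Tendsto (c * ·) (𝓝[≠] 0) (𝓝[≠] 0) := by
  refine tendsto_nhdsWithin_iff.2 ⟨?_, ?_⟩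
  · simpa using ((continuous_const_mul c).tendsto 0).mono_left nhdsWithin_le_nhds
  · filter_upwards [self_mem_nhdsWithin] with r hr using mul_ne_zero hc hr

lemma strictAntiOn_slope_exp_zero_div {a b : ℝ} (ha : a < 0) (hb : 0 < b) :
    StrictAntiOn (fun r => slope exp 0 (a * r) / slope exp 0 (b * r)) (Ioi 0) := by
  intro r (hr : 0 < r) s (hs : 0 < s) hrs
  have hnum : slope exp 0 (a * s) < slope exp 0 (a * r) :=
    strictMonoOn_slope_exp_zero (mul_neg_of_neg_of_pos ha hs).ne
      (mul_neg_of_neg_of_pos ha hr).ne (mul_lt_mul_of_neg_left hrs ha)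
  have hden : slope exp 0 (b * r) < slope exp 0 (b * s) :=
    strictMonoOn_slope_exp_zero (mul_pos hb hr).ne' (mul_pos hb hs).ne'
      (mul_lt_mul_of_pos_left hrs hb)
  exact div_lt_div₀ hnum hden.le (slope_exp_zero_pos (mul_neg_of_neg_of_pos ha hr).ne).le
    (slope_exp_zero_pos (mul_pos hb hr).ne')

lemma tendsto_slope_exp_zero_div {a b : ℝ} (ha : a ≠ 0) (hb : b ≠ 0) :
    Tendsto (fun r => slope exp 0 (a * r) / slope exp 0 (b * r)) (𝓝[≠] 0) (𝓝 1) := by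
  have h := (tendsto_slope_exp_zero.comp (tendsto_const_mul_nhdsNE_zero ha)).div
    (tendsto_slope_exp_zero.comp (tendsto_const_mul_nhdsNE_zero hb)) one_ne_zero
  rwa [div_one] at h

lemma exp_div_exp_eq_one_add_slope_div {Q S r : ℝ} (hQS : S ≠ Q) (hr : r ≠ 0) :
    (exp (Q * r) - exp (-S * r)) / (exp (Q * r) - exp (S * r)) =
      1 + 2 * S / (Q - S) * (slope exp 0 (-2 * S * r) / slope exp 0 ((Q - S) * r)) := by
  have hQS' : Q - S ≠ 0 := sub_ne_zero.2 hQS.symm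
  have hk := (slope_exp_zero_pos (mul_ne_zero hQS' hr)).ne'
  have hu := (exp_pos (S * r)).ne'
  have hQ : exp (Q * r) = exp ((Q - S) * r) * exp (S * r) := by rw [← exp_add]; ring_nf
  have hS : exp (-S * r) = exp (-2 * S * r) * exp (S * r) := by rw [← exp_add]; ring_nf
  rw [hQ, hS, ← one_add_mul_slope_exp_zero ((Q - S) * r),
    ← one_add_mul_slope_exp_zero (-2 * S * r)]
  field_simp
  ring

/-- For fixed `Q > S > 0`, the function `M(r) = (e^{Qr} - e^{-Sr})/(e^{Qr} - e^{Sr})`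
is strictly decreasing on `(0,∞)`, and its limit as `r → 0⁺` is `(Q+S)/(Q-S)`. -/
theorem M_strictAnti_and_tendsto (Q S : ℝ) (hS : 0 < S) (hQS : S < Q) :
    StrictAntiOn
        (fun r : ℝ => (Real.exp (Q * r) - Real.exp (-S * r)) /
          (Real.exp (Q * r) - Real.exp (S * r))) (Set.Ioi 0) ∧
      Filter.Tendsto
        (fun r : ℝ => (Real.exp (Q * r) - Real.exp (-S * r)) /
          (Real.exp (Q * r) - Real.exp (S * r)))
        (nhdsWithin 0 (Set.Ioi 0)) (nhds ((Q + S) / (Q - S))) := by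
  have hQS' : Q - S ≠ 0 := (sub_pos.2 hQS).ne'
  have hc : 0 < 2 * S / (Q - S) := div_pos (by positivity) (sub_pos.2 hQS)
  have hratio := strictAntiOn_slope_exp_zero_div (by linarith : -2 * S < 0) (sub_pos.2 hQS)
  constructor
  · intro r hr s hs hrs
    simp only [exp_div_exp_eq_one_add_slope_div hQS.ne (ne_of_gt hr),
      exp_div_exp_eq_one_add_slope_div hQS.ne (ne_of_gt hs)]
    exact add_lt_add_right (mul_lt_mul_of_pos_left (hratio hr hs hrs) hc) 1
  · have hlim : (Q + S) / (Q - S) = 1 + 2 * S / (Q - S) * 1 := by field_simp; ring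
    rw [hlim]
    refine Tendsto.congr' ?_ (tendsto_const_nhds.add
      (((tendsto_slope_exp_zero_div (by positivity : -2 * S ≠ 0) hQS').const_mul _).mono_left
        (nhdsWithin_mono _ fun r (hr : 0 < r) => hr.ne')))
    filter_upwards [self_mem_nhdsWithin] with r (hr : 0 < r)
    exact (exp_div_exp_eq_one_add_slope_div hQS.ne (ne_of_gt hr)).symm
end

section
/- Let X be a compact metric space, m a Borel probability measure on X, and f, g continuous nonnegative not-identically-zero functions with ∫ f dm = ∫ g dm = 1. If the Hilbert projective distance Θ₊(f,g) (for the cone of nonnegative functions) is finite, then ‖f - g‖_∞ ≤ (e^{Θ₊(f,g)} - 1) · min(‖f‖_∞, ‖g‖_∞). -/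
open scoped ENNReal
open MeasureTheory

/-!
Finiteness of `Θ₊(f, g)` forces `0 < A ≤ B < ∞`, and since the order of `C(X)` is closed the
extremal constants are attained: `A • f ≤ g ≤ B • f`. Integrating against `m` gives
`A ≤ 1 ≤ B`, so pointwise `|f - g| ≤ max (1 - A, B - 1) f ≤ (B / A - 1) f`; the same bound with
`g` in place of `f` follows from `B⁻¹ • g ≤ f ≤ A⁻¹ • g`, as `A⁻¹ / B⁻¹ = B / A`.
-/

/-- Extended logarithm `ℝ≥0∞ → EReal`, with `elog 0 = ⊥` and `elog ∞ = ⊤`. -/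
noncomputable def elog (x : ℝ≥0∞) : EReal :=
  if x = 0 then ⊥ else if x = ⊤ then ⊤ else ((Real.log x.toReal : ℝ) : EReal)

/-- The Hilbert projective (pseudo-)metric of a cone `Λ`. -/
noncomputable def hilbertTheta {E : Type*} [AddCommGroup E] [Module ℝ E]
    (Λ : Set E) (f g : E) : EReal :=
  elog
    ((sInf (ENNReal.ofReal '' {t : ℝ | 0 < t ∧ (t • f - g ∈ Λ ∨ t • f - g = 0)})) /
     (sSup (ENNReal.ofReal '' {t : ℝ | 0 < t ∧ (g - t • f ∈ Λ ∨ g - t • f = 0)})))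

theorem abs_sub_le_of_mul_le_of_le_mul {a b u v : ℝ} (hu : 0 ≤ u) (ha : 0 < a) (ha1 : a ≤ 1)
    (hb1 : 1 ≤ b) (hav : a * u ≤ v) (hvb : v ≤ b * u) : |u - v| ≤ (b / a - 1) * u := by
  have hb : b ≤ b / a := le_div_self (by linarith) ha ha1
  have ha' : 1 - a ≤ b / a - 1 := by
    rw [le_sub_iff_add_le, le_div_iff₀ ha]
    nlinarith [sq_nonneg (1 - a)]
  rw [abs_sub_le_iff]
  constructor
  · nlinarith [mul_le_mul_of_nonneg_right ha' hu]
  · nlinarith [mul_le_mul_of_nonneg_right hb hu]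

theorem abs_sub_le_mul_min_of_mul_le_of_le_mul {a b u v : ℝ} (hu : 0 ≤ u) (ha : 0 < a)
    (ha1 : a ≤ 1) (hb1 : 1 ≤ b) (hav : a * u ≤ v) (hvb : v ≤ b * u) :
    |u - v| ≤ (b / a - 1) * min u v := by
  have hb : 0 < b := by linarith
  have hvu : |v - u| ≤ (a⁻¹ / b⁻¹ - 1) * v :=
    abs_sub_le_of_mul_le_of_le_mul (by nlinarith) (inv_pos.2 hb) (inv_le_one_of_one_le₀ hb1)
      ((one_le_inv₀ ha).2 ha1) ((inv_mul_le_iff₀ hb).2 hvb) ((le_inv_mul_iff₀ ha).2 hav)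
  rw [inv_div_inv, abs_sub_comm] at hvu
  rw [mul_min_of_nonneg _ _ (by rw [sub_nonneg, one_le_div ha]; linarith)]
  exact le_min (abs_sub_le_of_mul_le_of_le_mul hu ha ha1 hb1 hav hvb) hvu

theorem ENNReal.ofReal_csInf {S : Set ℝ} (hS : S.Nonempty) (hS' : BddBelow S) :
    ENNReal.ofReal (sInf S) = sInf (ENNReal.ofReal '' S) :=
  Monotone.map_csInf_of_continuousAt ENNReal.continuous_ofReal.continuousAt ENNReal.ofReal_mono
    hS hS'

theorem ENNReal.ofReal_csSup {S : Set ℝ} (hS : S.Nonempty) (hS' : BddAbove S) :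
    ENNReal.ofReal (sSup S) = sSup (ENNReal.ofReal '' S) :=
  Monotone.map_csSup_of_continuousAt ENNReal.continuous_ofReal.continuousAt ENNReal.ofReal_mono
    hS hS'

theorem elog_top : elog ⊤ = ⊤ := by
  simp [elog]

theorem elog_ofReal {x : ℝ} (hx : 0 < x) : elog (ENNReal.ofReal x) = Real.log x := by
  simp [elog, hx, hx.le]

theorem nonempty_of_elog_sInf_div_sSup_ne_top {SB SA : Set ℝ} (hSB : ∀ t ∈ SB, 1 ≤ t)
    (hSA : ∀ t ∈ SA, t ≤ 1)
    (h : elog (sInf (ENNReal.ofReal '' SB) / sSup (ENNReal.ofReal '' SA)) ≠ ⊤) :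
    SB.Nonempty ∧ SA.Nonempty := by
  have hA : sSup (ENNReal.ofReal '' SA) ≤ 1 :=
    sSup_le (by rintro _ ⟨t, ht, rfl⟩; exact ENNReal.ofReal_le_one.2 (hSA t ht))
  have hB : 1 ≤ sInf (ENNReal.ofReal '' SB) :=
    le_sInf (by rintro _ ⟨t, ht, rfl⟩; exact ENNReal.one_le_ofReal.2 (hSB t ht))
  constructor
  · refine Set.nonempty_iff_ne_empty.2 fun hSB => h ?_
    rw [hSB, Set.image_empty, sInf_empty,
      ENNReal.top_div_of_ne_top (ne_top_of_le_ne_top ENNReal.one_ne_top hA), elog_top]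
  · refine Set.nonempty_iff_ne_empty.2 fun hSA => h ?_
    rw [hSA, Set.image_empty, sSup_empty, ENNReal.bot_eq_zero,
      ENNReal.div_zero (one_pos.trans_le hB).ne', elog_top]

theorem exp_toReal_elog_sInf_div_sSup {SB SA : Set ℝ} (hSB : SB.Nonempty) (hSB' : BddBelow SB)
    (hSA : SA.Nonempty) (hSA' : BddAbove SA) (hb : 0 < sInf SB) (ha : 0 < sSup SA) :
    Real.exp (elog (sInf (ENNReal.ofReal '' SB) / sSup (ENNReal.ofReal '' SA))).toReal =
      sInf SB / sSup SA := by
  rw [← ENNReal.ofReal_csInf hSB hSB', ← ENNReal.ofReal_csSup hSA hSA',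
    ← ENNReal.ofReal_div_of_pos ha, elog_ofReal (div_pos hb ha), EReal.toReal_coe,
    Real.exp_log (div_pos hb ha)]

namespace ContinuousMap

variable {X : Type*} [TopologicalSpace X]

theorem hilbertTheta_nonnegCone (f g : C(X, ℝ)) :
    hilbertTheta {u : C(X, ℝ) | (∀ x, 0 ≤ u x) ∧ u ≠ 0} f g =
      elog (sInf (ENNReal.ofReal '' {t : ℝ | 0 < t ∧ g ≤ t • f}) /
        sSup (ENNReal.ofReal '' {t : ℝ | 0 < t ∧ t • f ≤ g})) := by
  have hcone (u : C(X, ℝ)) : ((∀ x, 0 ≤ u x) ∧ u ≠ 0) ∨ u = 0 ↔ 0 ≤ u := by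
    by_cases hu : u = 0 <;> simp [hu, le_def]
  simp only [hilbertTheta, Set.mem_ofPred_eq, hcone, sub_nonneg]

theorem isClosed_setOf_le_smul (f g : C(X, ℝ)) : IsClosed {t : ℝ | g ≤ t • f} := by
  simp only [le_def, coe_smul, Pi.smul_apply, smul_eq_mul, Set.ofPred_forall]
  exact isClosed_iInter fun x => isClosed_le continuous_const (continuous_id.mul continuous_const)

theorem isClosed_setOf_smul_le (f g : C(X, ℝ)) : IsClosed {t : ℝ | t • f ≤ g} := by
  simp only [le_def, coe_smul, Pi.smul_apply, smul_eq_mul, Set.ofPred_forall]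
  exact isClosed_iInter fun x => isClosed_le (continuous_id.mul continuous_const) continuous_const

theorem le_sInf_smul {f g : C(X, ℝ)} {S : Set ℝ} (hS : S.Nonempty) (hS' : BddBelow S)
    (h : ∀ t ∈ S, g ≤ t • f) : g ≤ sInf S • f :=
  closure_minimal h (isClosed_setOf_le_smul f g) (csInf_mem_closure hS hS')

theorem sSup_smul_le {f g : C(X, ℝ)} {S : Set ℝ} (hS : S.Nonempty) (hS' : BddAbove S)
    (h : ∀ t ∈ S, t • f ≤ g) : sSup S • f ≤ g :=
  closure_minimal h (isClosed_setOf_smul_le f g) (csSup_mem_closure hS hS')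

theorem norm_sub_le_of_smul_le_of_le_smul [CompactSpace X] {f g : C(X, ℝ)} {a b : ℝ}
    (hf : 0 ≤ f) (ha : 0 < a) (ha1 : a ≤ 1) (hb1 : 1 ≤ b) (hfg : a • f ≤ g) (hgf : g ≤ b • f) :
    ‖f - g‖ ≤ (b / a - 1) * min ‖f‖ ‖g‖ := by
  have hc : 0 ≤ b / a - 1 := by rw [sub_nonneg, one_le_div ha]; linarith
  refine (norm_le _ (mul_nonneg hc (le_min (norm_nonneg f) (norm_nonneg g)))).2 fun x => ?_
  calc ‖(f - g) x‖ = |f x - g x| := Real.norm_eq_abs _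
    _ ≤ (b / a - 1) * min (f x) (g x) :=
      abs_sub_le_mul_min_of_mul_le_of_le_mul (hf x) ha ha1 hb1 (hfg x) (hgf x)
    _ ≤ (b / a - 1) * min ‖f‖ ‖g‖ := by
      gcongr <;> exact (Real.le_norm_self _).trans (norm_coe_le_norm _ x)

variable [CompactSpace X] [MeasurableSpace X] [OpensMeasurableSpace X] (μ : Measure X)
  [IsFiniteMeasure μ]

theorem integral_mono {f g : C(X, ℝ)} (h : f ≤ g) : ∫ x, f x ∂μ ≤ ∫ x, g x ∂μ :=
  MeasureTheory.integral_mono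
    (f.continuous.integrable_of_hasCompactSupport (.of_compactSpace _))
    (g.continuous.integrable_of_hasCompactSupport (.of_compactSpace _)) h

theorem one_le_of_le_smul {f g : C(X, ℝ)} {t : ℝ} (hf : ∫ x, f x ∂μ = 1)
    (hg : ∫ x, g x ∂μ = 1) (h : g ≤ t • f) : 1 ≤ t := by
  simpa [integral_const_mul, hf, hg] using integral_mono μ h

theorem le_one_of_smul_le {f g : C(X, ℝ)} {t : ℝ} (hf : ∫ x, f x ∂μ = 1)
    (hg : ∫ x, g x ∂μ = 1) (h : t • f ≤ g) : t ≤ 1 := by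
  simpa [integral_const_mul, hf, hg] using integral_mono μ h

end ContinuousMap

theorem norm_sub_le_of_hilbertTheta_general {X : Type*} [MetricSpace X] [CompactSpace X]
    [MeasurableSpace X] [BorelSpace X]
    (m : Measure X) [IsProbabilityMeasure m]
    (f g : C(X, ℝ)) (hf0 : ∀ x, 0 ≤ f x)
    (hfm : ∫ x, f x ∂m = 1) (hgm : ∫ x, g x ∂m = 1)
    (hfin_top : hilbertTheta {u : C(X, ℝ) | (∀ x, 0 ≤ u x) ∧ u ≠ 0} f g ≠ ⊤) :
    ‖f - g‖ ≤
      (Real.exp (hilbertTheta {u : C(X, ℝ) | (∀ x, 0 ≤ u x) ∧ u ≠ 0} f g).toReal - 1) *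
        min ‖f‖ ‖g‖ := by
  rw [ContinuousMap.hilbertTheta_nonnegCone] at hfin_top ⊢
  set SB := {t : ℝ | 0 < t ∧ g ≤ t • f}
  set SA := {t : ℝ | 0 < t ∧ t • f ≤ g}
  have hSB : ∀ t ∈ SB, 1 ≤ t := fun t ht => ContinuousMap.one_le_of_le_smul m hfm hgm ht.2
  have hSA : ∀ t ∈ SA, t ≤ 1 := fun t ht => ContinuousMap.le_one_of_smul_le m hfm hgm ht.2
  have hSB' : BddBelow SB := ⟨0, fun t ht => ht.1.le⟩
  obtain ⟨hSBne, hSAne⟩ := nonempty_of_elog_sInf_div_sSup_ne_top hSB hSA hfin_top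
  have hb1 : 1 ≤ sInf SB := le_csInf hSBne hSB
  have ha1 : sSup SA ≤ 1 := csSup_le hSAne hSA
  have ha : 0 < sSup SA := by
    obtain ⟨t, ht⟩ := hSAne
    exact ht.1.trans_le (le_csSup ⟨1, hSA⟩ ht)
  rw [exp_toReal_elog_sInf_div_sSup hSBne hSB' hSAne ⟨1, hSA⟩ (by linarith) ha]
  exact ContinuousMap.norm_sub_le_of_smul_le_of_le_smul (ContinuousMap.le_def.2 hf0) ha ha1 hb1
    (ContinuousMap.sSup_smul_le hSAne ⟨1, hSA⟩ fun t ht => ht.2)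
    (ContinuousMap.le_sInf_smul hSBne hSB' fun t ht => ht.2)

/-- If `f, g` are nonnegative, not identically zero continuous functions on a compact
metric space with `∫ f dm = ∫ g dm = 1` for a Borel probability measure `m`, and the
Hilbert projective distance `Θ₊(f,g)` (for the cone of nonnegative functions) is finite,
then `‖f - g‖∞ ≤ (e^{Θ₊(f,g)} - 1) · min (‖f‖∞, ‖g‖∞)`. -/
theorem norm_sub_le_of_hilbertTheta {X : Type*} [MetricSpace X] [CompactSpace X]
    [MeasurableSpace X] [BorelSpace X]
    (m : Measure X) [IsProbabilityMeasure m]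
    (f g : C(X, ℝ)) (hf0 : ∀ x, 0 ≤ f x) (hfne : f ≠ 0)
    (hg0 : ∀ x, 0 ≤ g x) (hgne : g ≠ 0)
    (hfm : ∫ x, f x ∂m = 1) (hgm : ∫ x, g x ∂m = 1)
    (hfin_top : hilbertTheta {u : C(X, ℝ) | (∀ x, 0 ≤ u x) ∧ u ≠ 0} f g ≠ ⊤)
    (hfin_bot : hilbertTheta {u : C(X, ℝ) | (∀ x, 0 ≤ u x) ∧ u ≠ 0} f g ≠ ⊥) :
    ‖f - g‖ ≤
      (Real.exp (hilbertTheta {u : C(X, ℝ) | (∀ x, 0 ≤ u x) ∧ u ≠ 0} f g).toReal - 1) *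
        min ‖f‖ ‖g‖ :=
  norm_sub_le_of_hilbertTheta_general m f g hf0 hfm hgm hfin_top
end

section
/- Let X be a compact metric space, m a Borel probability measure on X, and Z a set of continuous nonnegative functions f with ∫ f dm = 1. Suppose R, S > 0 satisfy: Θ₊(f,g) ≤ R for all f,g ∈ Z, and Θ₊(f, 1) ≤ S for all f ∈ Z (where Θ₊ is the Hilbert projective metric of the cone of nonnegative continuous functions). Then for all f, g ∈ Z, ‖g - f‖_∞ ≤ R⁻¹(e^R - 1) e^S · Θ₊(f,g). -/
open scoped ENNReal
open MeasureTheory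

/-!
If `Θ₊(f, g)` is finite, the extremal ratios `A = A(f, g)` and `B = B(f, g)` are attained, so
`A f ≤ g ≤ B f` and `Θ₊(f, g) = log (B / A)`; integrating against `m` gives `A ≤ 1 ≤ B`. Hence
`|g - f| ≤ (B - A) f ≤ (B / A - 1) ‖f‖ = (e^Θ₊(f, g) - 1) ‖f‖`. Convexity of `exp` bounds
`e^θ - 1` by `R⁻¹ (e^R - 1) θ` for `0 ≤ θ ≤ R`, and the same comparison of `f` with `1` gives
`‖f‖ ≤ e^Θ₊(f, 1) ≤ e^S`.
-/

open Set

theorem ENNReal.ofReal_csInf_s6 {s : Set ℝ} (hne : s.Nonempty) (hbdd : BddBelow s) :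
    ENNReal.ofReal (sInf s) = sInf (ENNReal.ofReal '' s) :=
  ENNReal.ofReal_mono.map_csInf_of_continuousAt ENNReal.continuous_ofReal.continuousAt hne hbdd

theorem ENNReal.ofReal_csSup_s6 {s : Set ℝ} (hne : s.Nonempty) (hbdd : BddAbove s) :
    ENNReal.ofReal (sSup s) = sSup (ENNReal.ofReal '' s) :=
  ENNReal.ofReal_mono.map_csSup_of_continuousAt ENNReal.continuous_ofReal.continuousAt hne hbdd

/-- The cone `C⁺` of nonnegative continuous functions, without `0`. -/
abbrev posCone (X : Type*) [TopologicalSpace X] : Set C(X, ℝ) :=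
  {u | (∀ x, 0 ≤ u x) ∧ u ≠ 0}

section Cone

variable {X : Type*} [TopologicalSpace X]

/-- The set whose supremum is `A(f, g)`. -/
def lowerRatios (f g : C(X, ℝ)) : Set ℝ := {t | 0 < t ∧ t • f ≤ g}

/-- The set whose infimum is `B(f, g)`. -/
def upperRatios (f g : C(X, ℝ)) : Set ℝ := {t | 0 < t ∧ g ≤ t • f}

theorem mem_posCone_or_eq_zero_iff (u : C(X, ℝ)) : u ∈ posCone X ∨ u = 0 ↔ 0 ≤ u := by
  constructor
  · rintro (⟨hu, -⟩ | rfl)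
    exacts [hu, le_rfl]
  · intro hu
    by_cases hu0 : u = 0
    exacts [Or.inr hu0, Or.inl ⟨hu, hu0⟩]

theorem hilbertTheta_posCone (f g : C(X, ℝ)) :
    hilbertTheta (posCone X) f g =
      elog (sInf (ENNReal.ofReal '' upperRatios f g) /
        sSup (ENNReal.ofReal '' lowerRatios f g)) := by
  simp only [hilbertTheta, mem_posCone_or_eq_zero_iff, sub_nonneg]
  rfl

variable {f g : C(X, ℝ)}

theorem bddAbove_lowerRatios {x : X} (hfx : 0 < f x) : BddAbove (lowerRatios f g) :=
  ⟨g x / f x, fun _ ht ↦ (le_div_iff₀ hfx).2 (ht.2 x)⟩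

theorem bddBelow_upperRatios : BddBelow (upperRatios f g) :=
  ⟨0, fun _ ht ↦ ht.1.le⟩

theorem sSup_lowerRatios_smul_le (hne : (lowerRatios f g).Nonempty)
    (hbdd : BddAbove (lowerRatios f g)) : sSup (lowerRatios f g) • f ≤ g := fun x ↦
  closure_minimal (fun _ ht ↦ ht.2 x) (isClosed_le (continuous_mul_const (f x)) continuous_const)
    (csSup_mem_closure hne hbdd)

theorem le_sInf_upperRatios_smul (hne : (upperRatios f g).Nonempty) :
    g ≤ sInf (upperRatios f g) • f := fun x ↦
  closure_minimal (fun _ ht ↦ ht.2 x) (isClosed_le continuous_const (continuous_mul_const (f x)))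
    (csInf_mem_closure hne bddBelow_upperRatios)

theorem upperRatios_nonempty_of_hilbertTheta_ne_top {x : X} (hfx : 0 < f x)
    (h : hilbertTheta (posCone X) f g ≠ ⊤) : (upperRatios f g).Nonempty := by
  by_contra hU
  rw [not_nonempty_iff_eq_empty] at hU
  have hsSup : sSup (ENNReal.ofReal '' lowerRatios f g) ≠ ⊤ :=
    ne_top_of_le_ne_top ENNReal.ofReal_ne_top
      (sSup_le (forall_mem_image.2 fun t ht ↦ ENNReal.ofReal_le_ofReal
        ((le_div_iff₀ hfx).2 (ht.2 x))))
  simp [hilbertTheta_posCone, hU, ENNReal.top_div_of_ne_top hsSup, elog] at h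

theorem lowerRatios_nonempty_of_hilbertTheta_ne_top (hf : 0 ≤ f) {x y : X} (hfx : 0 < f x)
    (hgy : 0 < g y) (h : hilbertTheta (posCone X) f g ≠ ⊤) : (lowerRatios f g).Nonempty := by
  by_contra hL
  rw [not_nonempty_iff_eq_empty] at hL
  have hU := upperRatios_nonempty_of_hilbertTheta_ne_top hfx h
  have hb : 0 < sInf (upperRatios f g) := by
    have hgy_le : g y ≤ sInf (upperRatios f g) * f y := le_sInf_upperRatios_smul hU y
    by_contra! hb
    exact hgy.not_ge (hgy_le.trans (mul_nonpos_of_nonpos_of_nonneg hb (hf y)))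
  have hsInf : sInf (ENNReal.ofReal '' upperRatios f g) ≠ 0 := by
    rw [← ENNReal.ofReal_csInf_s6 hU bddBelow_upperRatios]
    exact (ENNReal.ofReal_pos.2 hb).ne'
  simp [hilbertTheta_posCone, hL, ENNReal.div_zero hsInf, elog] at h

theorem hilbertTheta_posCone_eq_log {x : X} (hfx : 0 < f x) (hU : (upperRatios f g).Nonempty)
    (hL : (lowerRatios f g).Nonempty) :
    hilbertTheta (posCone X) f g =
      (Real.log (sInf (upperRatios f g) / sSup (lowerRatios f g)) : EReal) := by
  have hbdd : BddAbove (lowerRatios f g) := bddAbove_lowerRatios hfx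
  have ha : 0 < sSup (lowerRatios f g) := by
    obtain ⟨t, ht⟩ := hL
    exact ht.1.trans_le (le_csSup hbdd ht)
  have hab : sSup (lowerRatios f g) ≤ sInf (upperRatios f g) := by
    refine le_of_mul_le_mul_right ?_ hfx
    exact (sSup_lowerRatios_smul_le hL hbdd x).trans (le_sInf_upperRatios_smul hU x)
  have hba : 0 < sInf (upperRatios f g) / sSup (lowerRatios f g) := div_pos (ha.trans_le hab) ha
  rw [hilbertTheta_posCone, ← ENNReal.ofReal_csInf_s6 hU bddBelow_upperRatios,
    ← ENNReal.ofReal_csSup_s6 hL hbdd, ← ENNReal.ofReal_div_of_pos ha, elog,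
    if_neg (ENNReal.ofReal_pos.2 hba).ne', if_neg ENNReal.ofReal_ne_top,
    ENNReal.toReal_ofReal hba.le]

end Cone

theorem exists_pos_of_integral_pos {α : Type*} [MeasurableSpace α] {μ : Measure α} {f : α → ℝ}
    (h : 0 < ∫ x, f x ∂μ) : ∃ x, 0 < f x := by
  by_contra! hf
  exact (integral_nonpos hf).not_gt h

theorem ContinuousMap.norm_sub_le_of_smul_le_of_le_smul_s6 {X : Type*} [TopologicalSpace X]
    [CompactSpace X] {f g : C(X, ℝ)} {a b : ℝ} (hf : 0 ≤ f) (ha : a ≤ 1) (hb : 1 ≤ b)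
    (haf : a • f ≤ g) (hbf : g ≤ b • f) : ‖g - f‖ ≤ (b - a) * ‖f‖ := by
  refine (ContinuousMap.norm_le _ (mul_nonneg (by linarith) (norm_nonneg f))).2 fun x ↦ ?_
  have hfx : f x ≤ ‖f‖ := (le_abs_self _).trans (f.norm_coe_le_norm x)
  have hax : a * f x ≤ g x := haf x
  have hbx : g x ≤ b * f x := hbf x
  have hf0 : 0 ≤ f x := hf x
  rw [ContinuousMap.sub_apply, Real.norm_eq_abs, abs_le]
  constructor <;> nlinarith

theorem Real.exp_sub_one_le_mul_of_le {θ R : ℝ} (hR : 0 < R) (hθ : 0 ≤ θ) (hθR : θ ≤ R) :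
    Real.exp θ - 1 ≤ R⁻¹ * (Real.exp R - 1) * θ := by
  rcases hθ.eq_or_lt with rfl | hθ
  · simp
  have hslope := convexOn_exp.secant_mono (mem_univ 0) (mem_univ θ) (mem_univ R) hθ.ne' hR.ne' hθR
  simp only [Real.exp_zero, sub_zero] at hslope
  calc Real.exp θ - 1 = (Real.exp θ - 1) / θ * θ := by field_simp
    _ ≤ (Real.exp R - 1) / R * θ := by gcongr
    _ = R⁻¹ * (Real.exp R - 1) * θ := by ring

theorem ContinuousMap.integrable {X : Type*} [TopologicalSpace X] [CompactSpace X]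
    [MeasurableSpace X] [OpensMeasurableSpace X] (u : C(X, ℝ)) (m : Measure X)
    [IsFiniteMeasure m] : Integrable u m :=
  u.continuous.integrable_of_hasCompactSupport (HasCompactSupport.of_compactSpace _)

section Integral

variable {X : Type*} [TopologicalSpace X] [CompactSpace X] [MeasurableSpace X]
  [OpensMeasurableSpace X] {m : Measure X} {f g : C(X, ℝ)}

theorem le_one_of_smul_le_of_integral_eq_one [IsFiniteMeasure m] {t : ℝ}
    (hfm : ∫ x, f x ∂m = 1) (hgm : ∫ x, g x ∂m = 1) (h : t • f ≤ g) : t ≤ 1 := by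
  have := integral_mono ((f.integrable m).const_mul t) (g.integrable m) fun x ↦ h x
  simpa [integral_const_mul, hfm, hgm] using this

theorem one_le_of_le_smul_of_integral_eq_one [IsFiniteMeasure m] {t : ℝ}
    (hfm : ∫ x, f x ∂m = 1) (hgm : ∫ x, g x ∂m = 1) (h : g ≤ t • f) : 1 ≤ t := by
  have := integral_mono (g.integrable m) ((f.integrable m).const_mul t) fun x ↦ h x
  simpa [integral_const_mul, hfm, hgm] using this

theorem exists_hilbertTheta_posCone_eq_log [IsFiniteMeasure m] (hf : 0 ≤ f)
    (hfm : ∫ x, f x ∂m = 1) (hgm : ∫ x, g x ∂m = 1) (hΘ : hilbertTheta (posCone X) f g ≠ ⊤) :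
    ∃ a b : ℝ, 0 < a ∧ a ≤ 1 ∧ 1 ≤ b ∧ a • f ≤ g ∧ g ≤ b • f ∧
      hilbertTheta (posCone X) f g = (Real.log (b / a) : EReal) := by
  obtain ⟨x, hfx⟩ := exists_pos_of_integral_pos (hfm ▸ one_pos)
  obtain ⟨y, hgy⟩ := exists_pos_of_integral_pos (hgm ▸ one_pos)
  have hU := upperRatios_nonempty_of_hilbertTheta_ne_top hfx hΘ
  have hL := lowerRatios_nonempty_of_hilbertTheta_ne_top hf hfx hgy hΘ
  have hbdd : BddAbove (lowerRatios f g) := bddAbove_lowerRatios hfx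
  have haf := sSup_lowerRatios_smul_le hL hbdd
  have hbf := le_sInf_upperRatios_smul hU
  obtain ⟨t, ht⟩ := hL
  exact ⟨_, _, ht.1.trans_le (le_csSup hbdd ht), le_one_of_smul_le_of_integral_eq_one hfm hgm haf,
    one_le_of_le_smul_of_integral_eq_one hfm hgm hbf, haf, hbf,
    hilbertTheta_posCone_eq_log hfx hU ⟨t, ht⟩⟩

theorem norm_le_exp_of_hilbertTheta_one_le [IsProbabilityMeasure m] (hf : 0 ≤ f)
    (hfm : ∫ x, f x ∂m = 1) {S : ℝ} (hS : hilbertTheta (posCone X) f 1 ≤ S) :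
    ‖f‖ ≤ Real.exp S := by
  obtain ⟨a, b, ha, -, hb, haf, -, hΘ⟩ := exists_hilbertTheta_posCone_eq_log hf hfm (by simp)
    (ne_top_of_le_ne_top (EReal.coe_ne_top S) hS)
  have hθS : Real.log (b / a) ≤ S := by
    rw [hΘ] at hS
    exact_mod_cast hS
  refine (ContinuousMap.norm_le _ (Real.exp_pos S).le).2 fun x ↦ ?_
  have hax : a * f x ≤ 1 := haf x
  calc ‖f x‖ = f x := Real.norm_of_nonneg (hf x)
    _ ≤ 1 / a := (le_div_iff₀ ha).2 (by linarith)
    _ ≤ b / a := by gcongr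
    _ = Real.exp (Real.log (b / a)) := (Real.exp_log (div_pos (one_pos.trans_le hb) ha)).symm
    _ ≤ Real.exp S := Real.exp_le_exp.2 hθS

end Integral

theorem norm_sub_le_mul_hilbertTheta_general {X : Type*} [MetricSpace X] [CompactSpace X]
    [MeasurableSpace X] [BorelSpace X]
    (m : Measure X) [IsProbabilityMeasure m]
    (Z : Set C(X, ℝ))
    (hZ0 : ∀ f ∈ Z, ∀ x, 0 ≤ f x)
    (hZm : ∀ f ∈ Z, ∫ x, f x ∂m = 1)
    (R S : ℝ) (hR : 0 < R)
    (hdiam : ∀ f ∈ Z, ∀ g ∈ Z,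
      hilbertTheta {u : C(X, ℝ) | (∀ x, 0 ≤ u x) ∧ u ≠ 0} f g ≤ (R : EReal))
    (hone : ∀ f ∈ Z,
      hilbertTheta {u : C(X, ℝ) | (∀ x, 0 ≤ u x) ∧ u ≠ 0} f (1 : C(X, ℝ)) ≤ (S : EReal)) :
    ∀ f ∈ Z, ∀ g ∈ Z,
      ‖g - f‖ ≤ R⁻¹ * (Real.exp R - 1) * Real.exp S *
        (hilbertTheta {u : C(X, ℝ) | (∀ x, 0 ≤ u x) ∧ u ≠ 0} f g).toReal := by
  intro f hf g hg
  obtain ⟨a, b, ha, ha1, hb1, haf, hbf, hΘ⟩ := exists_hilbertTheta_posCone_eq_log (hZ0 f hf)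
    (hZm f hf) (hZm g hg) (ne_top_of_le_ne_top (EReal.coe_ne_top R) (hdiam f hf g hg))
  have hθR : Real.log (b / a) ≤ R := by
    have := hdiam f hf g hg
    rw [hΘ] at this
    exact_mod_cast this
  have hθ : 0 ≤ Real.log (b / a) := Real.log_nonneg ((one_le_div ha).2 (ha1.trans hb1))
  have hba : b - a ≤ R⁻¹ * (Real.exp R - 1) * Real.log (b / a) := by
    refine le_trans ?_ (Real.exp_sub_one_le_mul_of_le hR hθ hθR)
    rw [Real.exp_log (div_pos (ha.trans_le (ha1.trans hb1)) ha), div_sub_one ha.ne',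
      le_div_iff₀ ha]
    nlinarith
  rw [hΘ, EReal.toReal_coe]
  calc ‖g - f‖ ≤ (b - a) * ‖f‖ :=
        ContinuousMap.norm_sub_le_of_smul_le_of_le_smul_s6 (hZ0 f hf) ha1 hb1 haf hbf
    _ ≤ (R⁻¹ * (Real.exp R - 1) * Real.log (b / a)) * Real.exp S := by
        gcongr
        · linarith
        · exact norm_le_exp_of_hilbertTheta_one_le (hZ0 f hf) (hZm f hf) (hone f hf)
    _ = R⁻¹ * (Real.exp R - 1) * Real.exp S * Real.log (b / a) := by ring

/-- Let `Z` be a set of nonnegative continuous functions of integral `1` with respect to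
a Borel probability measure `m` on a compact metric space. If `R, S > 0` are such that
`Θ₊(f,g) ≤ R` for all `f, g ∈ Z` and `Θ₊(f, 1) ≤ S` for all `f ∈ Z` (Hilbert metric of
the nonnegative cone), then `‖g - f‖∞ ≤ R⁻¹ (e^R - 1) e^S Θ₊(f,g)` for all `f, g ∈ Z`. -/
theorem norm_sub_le_mul_hilbertTheta {X : Type*} [MetricSpace X] [CompactSpace X]
    [MeasurableSpace X] [BorelSpace X]
    (m : Measure X) [IsProbabilityMeasure m]
    (Z : Set C(X, ℝ))
    (hZ0 : ∀ f ∈ Z, ∀ x, 0 ≤ f x)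
    (hZm : ∀ f ∈ Z, ∫ x, f x ∂m = 1)
    (R S : ℝ) (hR : 0 < R) (hS : 0 < S)
    (hdiam : ∀ f ∈ Z, ∀ g ∈ Z,
      hilbertTheta {u : C(X, ℝ) | (∀ x, 0 ≤ u x) ∧ u ≠ 0} f g ≤ (R : EReal))
    (hone : ∀ f ∈ Z,
      hilbertTheta {u : C(X, ℝ) | (∀ x, 0 ≤ u x) ∧ u ≠ 0} f (1 : C(X, ℝ)) ≤ (S : EReal)) :
    ∀ f ∈ Z, ∀ g ∈ Z,
      ‖g - f‖ ≤ R⁻¹ * (Real.exp R - 1) * Real.exp S *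
        (hilbertTheta {u : C(X, ℝ) | (∀ x, 0 ≤ u x) ∧ u ≠ 0} f g).toReal :=
  norm_sub_le_mul_hilbertTheta_general m Z hZ0 hZm R S hR hdiam hone
end

section
/- Fix a compact metric space X, δ > 0, β > 0, and Q > S > 0, R > 0. Let Λ(Q) = {f ∈ C(X) : f ≥ 0, f ≢ 0, and f(x) ≤ e^{Q d(x,y)^β} f(y) whenever d(x,y) ≤ δ}, and let Θ be the Hilbert projective metric of the cone Λ(Q). Then for any f, g ∈ Λ(S) with sup f ≤ R inf f and sup g ≤ R inf g, we have Θ(f,g) ≤ 2 log( ((Q+S)/(Q-S)) · R ). -/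
open scoped ENNReal

/-- The log-Hölder cone `Λ(Q)` at scale `δ`, exponent `β`, in `C(X, ℝ)`. -/
def logHolderCone (X : Type*) [MetricSpace X] (Q δ β : ℝ) : Set C(X, ℝ) :=
  {f : C(X, ℝ) | (∀ x, 0 ≤ f x) ∧ f ≠ 0 ∧
    ∀ x y : X, dist x y ≤ δ → f x ≤ Real.exp (Q * dist x y ^ β) * f y}

/-! Write `c = (Q - S)/(Q + S)`. If `φ, ψ ∈ Λ(S)` and `ψ ≤ c φ`, then `φ - ψ ∈ Λ(Q)`: after using
the `S`-Hölder bounds of `φ` and `ψ`, this reduces to `c (e^{Qu} - e^{-Su}) ≤ e^{Qu} - e^{Su}`,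
which is convexity of `exp`, since `Su` is the convex combination of `Qu` and `-Su` with weights
`1 - c` and `c`. With `sup f ≤ R inf f` and `sup g ≤ R inf g`, the extremal values give
`a f ≤ g ≤ b f` with `b ≤ R² a`, so `g - c a f` and `(b / c) f - g` lie in `Λ(Q)`, and
`Θ(f, g) ≤ log (b / (c² a)) ≤ 2 log (R / c)`. -/

open Real

lemma elog_le_log_of_le_ofReal {x : ℝ≥0∞} {r : ℝ} (h : x ≤ ENNReal.ofReal r) :
    elog x ≤ ((log r : ℝ) : EReal) := by
  unfold elog
  rcases eq_or_ne x 0 with rfl | hx0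
  · simp
  have hxt : x ≠ ⊤ := ne_top_of_le_ne_top ENNReal.ofReal_ne_top h
  have hr : 0 < r := ENNReal.ofReal_pos.1 (pos_iff_ne_zero.2 hx0 |>.trans_le h)
  rw [if_neg hx0, if_neg hxt, EReal.coe_le_coe_iff]
  exact log_le_log (ENNReal.toReal_pos hx0 hxt) (ENNReal.toReal_le_of_le_ofReal hr.le h)

theorem hilbertTheta_le_log_div {E : Type*} [AddCommGroup E] [Module ℝ E] {Λ : Set E}
    {f g : E} {a b : ℝ} (ha : 0 < a) (hb : 0 < b) (hga : g - a • f ∈ Λ) (hbg : b • f - g ∈ Λ) :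
    hilbertTheta Λ f g ≤ ((log (b / a) : ℝ) : EReal) := by
  refine elog_le_log_of_le_ofReal <|
    (ENNReal.div_le_div (sInf_le ?_) (le_sSup ?_)).trans (ENNReal.ofReal_div_of_pos ha).ge
  exacts [⟨b, ⟨hb, .inl hbg⟩, rfl⟩, ⟨a, ⟨ha, .inl hga⟩, rfl⟩]

lemma sub_mul_exp_sub_exp_neg_le {Q S : ℝ} (hS : 0 ≤ S) (hSQ : S < Q) (u : ℝ) :
    (Q - S) * (exp (Q * u) - exp (-(S * u))) ≤ (Q + S) * (exp (Q * u) - exp (S * u)) := by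
  have hQS : 0 < Q + S := by linarith
  have hconv := convexOn_exp.2 (Set.mem_univ (Q * u)) (Set.mem_univ (-(S * u)))
    (by positivity : 0 ≤ 2 * S / (Q + S)) (div_nonneg (by linarith) hQS.le : 0 ≤ (Q - S) / (Q + S))
    (by field_simp; ring)
  have hcomb : 2 * S / (Q + S) * (Q * u) + (Q - S) / (Q + S) * -(S * u) = S * u := by
    field_simp; ring
  simp only [smul_eq_mul, hcomb] at hconv
  rw [div_mul_eq_mul_div, div_mul_eq_mul_div, ← add_div, le_div_iff₀ hQS] at hconv
  linarith

section LogHolderCone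

variable {X : Type*} [MetricSpace X] {Q S δ β : ℝ}

lemma smul_mem_logHolderCone {f : C(X, ℝ)} {t : ℝ} (ht : 0 < t) (hf : f ∈ logHolderCone X Q δ β) :
    t • f ∈ logHolderCone X Q δ β := by
  obtain ⟨hf0, hfne, hfH⟩ := hf
  refine ⟨fun x => mul_nonneg ht.le (hf0 x), smul_ne_zero ht.ne' hfne, fun x y hxy => ?_⟩
  simp only [ContinuousMap.smul_apply, smul_eq_mul, mul_left_comm _ t]
  exact mul_le_mul_of_nonneg_left (hfH x y hxy) ht.le

theorem sub_mem_logHolderCone (hS : 0 < S) (hSQ : S < Q) {φ ψ : C(X, ℝ)}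
    (hφ : φ ∈ logHolderCone X S δ β) (hψ : ψ ∈ logHolderCone X S δ β)
    (hψφ : ∀ x, ψ x ≤ (Q - S) / (Q + S) * φ x) : φ - ψ ∈ logHolderCone X Q δ β := by
  obtain ⟨hφ0, hφne, hφH⟩ := hφ
  have hQS : 0 < Q + S := by linarith
  have hc : (Q - S) / (Q + S) < 1 := (div_lt_one hQS).2 (by linarith)
  have hlower : ∀ x, (1 - (Q - S) / (Q + S)) * φ x ≤ (φ - ψ) x := fun x => by
    simp only [ContinuousMap.sub_apply]; linarith [hψφ x]
  refine ⟨fun x => (mul_nonneg (by linarith) (hφ0 x)).trans (hlower x), fun h => hφne ?_,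
    fun x y hxy => ?_⟩
  · ext x
    have := hlower x
    rw [h, ContinuousMap.zero_apply] at this
    exact le_antisymm (nonpos_of_mul_nonpos_right this (by linarith)) (hφ0 x)
  set u := dist x y ^ β
  have hφxy : φ x ≤ exp (S * u) * φ y := hφH x y hxy
  have hψyx : exp (-(S * u)) * ψ y ≤ ψ x := by
    rw [exp_neg, inv_mul_le_iff₀ (exp_pos _)]
    simpa only [dist_comm y x] using hψ.2.2 y x (by rwa [dist_comm])
  have hexp : exp (-(S * u)) ≤ exp (Q * u) :=
    exp_le_exp.2 (by nlinarith [rpow_nonneg (dist_nonneg (x := x) (y := y)) β])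
  have hkey : (exp (Q * u) - exp (-(S * u))) * ψ y ≤ (exp (Q * u) - exp (S * u)) * φ y := by
    have hconv := sub_mul_exp_sub_exp_neg_le hS.le hSQ u
    rw [← div_le_iff₀' hQS, mul_div_right_comm] at hconv
    calc _ ≤ (exp (Q * u) - exp (-(S * u))) * ((Q - S) / (Q + S) * φ y) :=
          mul_le_mul_of_nonneg_left (hψφ y) (by linarith)
      _ = (Q - S) / (Q + S) * (exp (Q * u) - exp (-(S * u))) * φ y := by ring
      _ ≤ _ := mul_le_mul_of_nonneg_right hconv (hφ0 y)
  simp only [ContinuousMap.sub_apply]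
  linarith

end LogHolderCone

lemma pos_of_le_mul {X : Type*} {f : X → ℝ} {R : ℝ} (hf0 : ∀ x, 0 ≤ f x) (hfne : f ≠ 0)
    (hfR : ∀ x y, f x ≤ R * f y) (x : X) : 0 < f x := by
  refine (hf0 x).lt_of_ne fun hx => hfne (funext fun y => ?_)
  exact le_antisymm (by simpa [← hx] using hfR y x) (hf0 y)

lemma exists_smul_le_le_smul_of_le_mul {X : Type*} [TopologicalSpace X] [CompactSpace X]
    [Nonempty X] {f g : C(X, ℝ)} {R : ℝ} (hf : ∀ x, 0 < f x) (hg : ∀ x, 0 < g x)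
    (hfR : ∀ x y, f x ≤ R * f y) (hgR : ∀ x y, g x ≤ R * g y) :
    ∃ a b : ℝ, 0 < a ∧ 0 < b ∧ (∀ x, a * f x ≤ g x) ∧ (∀ x, g x ≤ b * f x) ∧ b ≤ R ^ 2 * a := by
  obtain ⟨pf, -, hpf⟩ := isCompact_univ.exists_isMaxOn Set.univ_nonempty f.continuous.continuousOn
  obtain ⟨qf, -, hqf⟩ := isCompact_univ.exists_isMinOn Set.univ_nonempty f.continuous.continuousOn
  obtain ⟨pg, -, hpg⟩ := isCompact_univ.exists_isMaxOn Set.univ_nonempty g.continuous.continuousOn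
  obtain ⟨qg, -, hqg⟩ := isCompact_univ.exists_isMinOn Set.univ_nonempty g.continuous.continuousOn
  have hfmax (x) : f x ≤ f pf := hpf (Set.mem_univ x)
  have hfmin (x) : f qf ≤ f x := hqf (Set.mem_univ x)
  have hgmax (x) : g x ≤ g pg := hpg (Set.mem_univ x)
  have hgmin (x) : g qg ≤ g x := hqg (Set.mem_univ x)
  refine ⟨g qg / f pf, g pg / f qf, div_pos (hg qg) (hf pf), div_pos (hg pg) (hf qf),
    fun x => ?_, fun x => ?_, ?_⟩
  · rw [div_mul_eq_mul_div, div_le_iff₀ (hf pf)]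
    exact mul_le_mul (hgmin x) (hfmax x) (hf x).le (hg x).le
  · rw [div_mul_eq_mul_div, le_div_iff₀ (hf qf)]
    exact mul_le_mul (hgmax x) (hfmin x) (hf qf).le (hg pg).le
  · rw [div_le_iff₀ (hf qf), mul_assoc, div_mul_eq_mul_div, mul_div_assoc', le_div_iff₀ (hf pf)]
    nlinarith [mul_le_mul (hgR pg qg) (hfR pf qf) (hf pf).le
      ((hg pg).le.trans (hgR pg qg)), hf pf, hg qg]

theorem hilbertTheta_le_of_logHolder_general {X : Type*} [MetricSpace X] [CompactSpace X]
    (δ β Q S R : ℝ) (hS : 0 < S) (hQS : S < Q)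
    (f g : C(X, ℝ)) (hf : f ∈ logHolderCone X S δ β) (hg : g ∈ logHolderCone X S δ β)
    (hfR : ∀ x y : X, f x ≤ R * f y) (hgR : ∀ x y : X, g x ≤ R * g y) :
    hilbertTheta (logHolderCone X Q δ β) f g ≤
      ((2 * Real.log ((Q + S) / (Q - S) * R) : ℝ) : EReal) := by
  obtain ⟨x₀, -⟩ : ∃ x, f x ≠ 0 := by
    by_contra! h
    exact hf.2.1 (ContinuousMap.ext h)
  have : Nonempty X := ⟨x₀⟩
  obtain ⟨a, b, ha, hb, hag, hgb, hba⟩ := exists_smul_le_le_smul_of_le_mul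
    (pos_of_le_mul hf.1 (DFunLike.coe_injective.ne hf.2.1) hfR)
    (pos_of_le_mul hg.1 (DFunLike.coe_injective.ne hg.2.1) hgR) hfR hgR
  set c := (Q - S) / (Q + S) with hc_def
  have hc : 0 < c := div_pos (by linarith) (by linarith)
  have hlower : g - (c * a) • f ∈ logHolderCone X Q δ β :=
    sub_mem_logHolderCone hS hQS hg (smul_mem_logHolderCone (mul_pos hc ha) hf) fun x => by
      simpa only [ContinuousMap.smul_apply, smul_eq_mul, mul_assoc] using
        mul_le_mul_of_nonneg_left (hag x) hc.le
  have hupper : (b / c) • f - g ∈ logHolderCone X Q δ β :=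
    sub_mem_logHolderCone hS hQS (smul_mem_logHolderCone (div_pos hb hc) hf) hg fun x => by
      rw [ContinuousMap.smul_apply, smul_eq_mul, ← mul_assoc, mul_div_cancel₀ _ hc.ne']
      exact hgb x
  have hratio : b / c / (c * a) ≤ ((Q + S) / (Q - S) * R) ^ 2 := by
    rw [← inv_div (Q - S), ← hc_def, div_div, div_le_iff₀ (by positivity)]
    calc b ≤ R ^ 2 * a := hba
      _ = (c⁻¹ * R) ^ 2 * (c * (c * a)) := by field_simp
  calc hilbertTheta (logHolderCone X Q δ β) f g ≤ ((log (b / c / (c * a)) : ℝ) : EReal) :=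
        hilbertTheta_le_log_div (mul_pos hc ha) (div_pos hb hc) hlower hupper
    _ ≤ ((log (((Q + S) / (Q - S) * R) ^ 2) : ℝ) : EReal) :=
        EReal.coe_le_coe_iff.2 (log_le_log (by positivity) hratio)
    _ = _ := by rw [log_pow]; norm_cast

/-- For `Q > S > 0` and `R > 0`, any `f, g ∈ Λ(S)` with `sup f ≤ R inf f` and
`sup g ≤ R inf g` satisfy `Θ(f,g) ≤ 2 log (((Q+S)/(Q-S)) R)`, where `Θ` is the
Hilbert projective metric of the cone `Λ(Q)`. -/
theorem hilbertTheta_le_of_logHolder {X : Type*} [MetricSpace X] [CompactSpace X]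
    (δ β Q S R : ℝ) (hδ : 0 < δ) (hβ : 0 < β) (hS : 0 < S) (hQS : S < Q) (hR : 0 < R)
    (f g : C(X, ℝ)) (hf : f ∈ logHolderCone X S δ β) (hg : g ∈ logHolderCone X S δ β)
    (hfR : ∀ x y : X, f x ≤ R * f y) (hgR : ∀ x y : X, g x ≤ R * g y) :
    hilbertTheta (logHolderCone X Q δ β) f g ≤
      ((2 * Real.log ((Q + S) / (Q - S) * R) : ℝ) : EReal) :=
  hilbertTheta_le_of_logHolder_general δ β Q S R hS hQS f g hf hg hfR hgR
end
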